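/- arXiv:1403.3348 — 2 statements merged into one kernel-verified Lean document; each statement's English description precedes it below -/
import Mathlib

section
/- Let X be a Banach space and E, F Banach lattices such that E has the dual positive Schur property and F has property (d). If R : X → E is a bounded linear operator and S : E → F is a positive operator, then the composition S ∘ R : X → F is almost limited. -/
open Filter Topology Metric Set NormedSpace BoundedContinuousFunction

noncomputable section

/-- The value `|f| x` of the modulus of a functional `f` in the dual of a Banach lattice,
at a positive element `x`, given by the Riesz–Kantorovich formula. -/
def dualAbs {E : Type*} [NormedAddCommGroup E] [Lattice E] [IsOrderedAddMonoid E] [HasSolidNorm E] [NormedSpace ℝ E]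
    (f : E →L[ℝ] ℝ) (x : E) : ℝ :=
  sSup {r : ℝ | ∃ z : E, |z| ≤ x ∧ r = |f z|}

/-- Two functionals `f, g` on a Banach lattice are disjoint, i.e. `|f| ⊓ |g| = 0` in the dual
lattice; by the Riesz–Kantorovich formula this means that for every `x ≥ 0` the infimum of
`|f| y + |g| (x - y)` over `0 ≤ y ≤ x` is `0`. -/
def DualDisjoint {E : Type*} [NormedAddCommGroup E] [Lattice E] [IsOrderedAddMonoid E] [HasSolidNorm E] [NormedSpace ℝ E]
    (f g : E →L[ℝ] ℝ) : Prop :=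
  ∀ x : E, 0 ≤ x → ∀ ε : ℝ, 0 < ε →
    ∃ y : E, 0 ≤ y ∧ y ≤ x ∧ dualAbs f y + dualAbs g (x - y) < ε

/-- A sequence of functionals is weak* null if it converges to `0` pointwise. -/
def WeakStarNull {E : Type*} [NormedAddCommGroup E] [NormedSpace ℝ E]
    (f : ℕ → E →L[ℝ] ℝ) : Prop :=
  ∀ x : E, Tendsto (fun n => f n x) atTop (𝓝 0)

/-- A functional on a Banach lattice is positive if it is nonnegative on the positive cone. -/
def PositiveFunctional {E : Type*} [NormedAddCommGroup E] [Lattice E] [IsOrderedAddMonoid E] [HasSolidNorm E] [NormedSpace ℝ E]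
    (f : E →L[ℝ] ℝ) : Prop :=
  ∀ x : E, 0 ≤ x → 0 ≤ f x

/-- An operator between Banach lattices is positive if it maps the positive cone into
the positive cone. -/
def IsPositiveOp {E F : Type*} [NormedAddCommGroup E] [Lattice E] [IsOrderedAddMonoid E] [HasSolidNorm E] [NormedSpace ℝ E]
    [NormedAddCommGroup F] [Lattice F] [IsOrderedAddMonoid F] [HasSolidNorm F] [NormedSpace ℝ F] (T : E →L[ℝ] F) : Prop :=
  ∀ x : E, 0 ≤ x → 0 ≤ T x

/-- An operator `T : X → E` into a Banach lattice is almost limited if `‖T* fₙ‖ → 0` for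
every disjoint weak* null sequence `(fₙ)` in `E*`. -/
def AlmostLimited {X E : Type*} [NormedAddCommGroup X] [NormedSpace ℝ X]
    [NormedAddCommGroup E] [Lattice E] [IsOrderedAddMonoid E] [HasSolidNorm E] [NormedSpace ℝ E] (T : X →L[ℝ] E) : Prop :=
  ∀ f : ℕ → E →L[ℝ] ℝ, WeakStarNull f → Pairwise (fun n m => DualDisjoint (f n) (f m)) →
    Tendsto (fun n => ‖(f n).comp T‖) atTop (𝓝 0)

/-- A Banach lattice `E` has property (d) if `|fₙ| → 0` in the weak* topology for every
disjoint weak* null sequence `(fₙ)` in `E*` (it suffices to test `|fₙ|` on the positive cone). -/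
def PropertyD (E : Type*) [NormedAddCommGroup E] [Lattice E] [IsOrderedAddMonoid E] [HasSolidNorm E] [NormedSpace ℝ E] : Prop :=
  ∀ f : ℕ → E →L[ℝ] ℝ, WeakStarNull f → Pairwise (fun n m => DualDisjoint (f n) (f m)) →
    ∀ x : E, 0 ≤ x → Tendsto (fun n => dualAbs (f n) x) atTop (𝓝 0)

/-- A Banach lattice `E` has the dual positive Schur property if every weak* null sequence of
positive functionals is norm null. -/
def DualPositiveSchur (E : Type*) [NormedAddCommGroup E] [Lattice E] [IsOrderedAddMonoid E] [HasSolidNorm E] [NormedSpace ℝ E] : Prop :=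
  ∀ f : ℕ → E →L[ℝ] ℝ, WeakStarNull f → (∀ n, PositiveFunctional (f n)) →
    Tendsto (fun n => ‖f n‖) atTop (𝓝 0)

/-- A Banach lattice `F` has the positive Schur property if every weakly null sequence of
positive elements is norm null. -/
def PositiveSchur (F : Type*) [NormedAddCommGroup F] [Lattice F] [IsOrderedAddMonoid F] [HasSolidNorm F] [NormedSpace ℝ F] : Prop :=
  ∀ x : ℕ → F, (∀ g : F →L[ℝ] ℝ, Tendsto (fun n => g (x n)) atTop (𝓝 0)) →
    (∀ n, 0 ≤ x n) → Tendsto (fun n => ‖x n‖) atTop (𝓝 0)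

/-- An operator is weakly compact if the image of the closed unit ball is relatively
compact in the weak topology. -/
def IsWeaklyCompactOp {X Y : Type*} [NormedAddCommGroup X] [NormedSpace ℝ X]
    [NormedAddCommGroup Y] [NormedSpace ℝ Y] (T : X →L[ℝ] Y) : Prop :=
  IsCompact (closure (toWeakSpaceCLM ℝ Y '' (T '' closedBall 0 1)))

/-- A lattice is σ-Dedekind complete if every countable nonempty order-bounded subset has a
supremum. -/
def SigmaDedekindComplete (E : Type*) [Lattice E] : Prop :=
  ∀ s : Set E, s.Countable → s.Nonempty → BddAbove s → ∃ a, IsLUB s a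

/-- The norm of a Banach lattice is order continuous if `x_α ↓ 0` implies `‖x_α‖ ↓ 0`,
for every decreasing net `(x_α)` with infimum `0`. -/
def HasOrderContinuousNorm (E : Type*) [NormedAddCommGroup E] [Lattice E] [IsOrderedAddMonoid E] [HasSolidNorm E] : Prop :=
  ∀ ⦃ι : Type*⦄ [Preorder ι] [Nonempty ι] [IsDirected ι (· ≤ ·)] (x : ι → E),
    Antitone x → IsGLB (Set.range x) 0 → Tendsto (fun i => ‖x i‖) atTop (𝓝 0)

/-- A Banach space is reflexive if the canonical embedding into its double dual is
surjective. -/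
def ReflexiveSpace (X : Type*) [NormedAddCommGroup X] [NormedSpace ℝ X] : Prop :=
  Function.Surjective (inclusionInDoubleDual ℝ X)

/-- The Banach lattice `ℓ^∞` of bounded real sequences. -/
abbrev LinftySeq : Type := ℕ →ᵇ ℝ

/-!
Write `|f|` (`dualModulus f`) for the modulus of a functional `f ∈ F*`: on the positive cone it is
the Riesz–Kantorovich formula `dualAbs`, additive there by Riesz decomposition and positively
homogeneous, and it is extended linearly by `|f| x = |f| x⁺ - |f| x⁻`. For a disjoint weak* null
sequence `(fₙ)` in `F*`, property (d) makes `|fₙ|` weak* null, so `|fₙ| ∘ S` is a weak* null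
sequence of positive functionals on `E`, hence norm null by the dual positive Schur property.
Positivity of `S` gives `|fₙ (S y)| ≤ |fₙ| (S |y|)`, so `‖fₙ ∘ S ∘ R‖ ≤ ‖|fₙ| ∘ S‖ ‖R‖ → 0`.
-/

theorem exists_add_abs_le_of_abs_le_add {G : Type*} [Lattice G] [AddCommGroup G]
    [IsOrderedAddMonoid G] {a b z : G} (ha : 0 ≤ a) (hb : 0 ≤ b) (hz : |z| ≤ a + b) :
    ∃ z₁ z₂ : G, z = z₁ + z₂ ∧ |z₁| ≤ a ∧ |z₂| ≤ b := by
  set z₁ : G := (z ⊔ -a) ⊓ a with hz₁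
  have hlow : -a ≤ z₁ := le_inf le_sup_right (neg_le_self ha)
  have hrest : z - z₁ = (0 ⊓ (z + a)) ⊔ (z - a) := by
    rw [hz₁, sub_inf, sub_sup, sub_self, sub_neg_eq_add]
  have hz_le : z ≤ a + b := (le_abs_self z).trans hz
  have hz_ge : -b ≤ z + a :=
    calc -b = -(a + b) + a := by abel
      _ ≤ z + a := add_le_add_left (neg_le.1 ((neg_le_abs z).trans hz)) a
  refine ⟨z₁, z - z₁, (add_sub_cancel z₁ z).symm, abs_le'.2 ⟨inf_le_right, neg_le.2 hlow⟩, ?_⟩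
  rw [hrest]
  refine abs_le'.2 ⟨sup_le (inf_le_left.trans hb) (sub_le_iff_le_add'.2 hz_le), ?_⟩
  exact neg_le.2 (le_sup_of_le_left (le_inf (neg_nonpos.2 hb) hz_ge))

theorem abs_smul_le_smul_abs {M : Type*} [Lattice M] [AddCommGroup M] [IsOrderedAddMonoid M]
    [Module ℝ M] [PosSMulMono ℝ M] {c : ℝ} (hc : 0 ≤ c) (z : M) :
    |c • z| ≤ c • |z| := by
  refine abs_le'.2 ⟨smul_le_smul_of_nonneg_left (le_abs_self z) hc, ?_⟩
  rw [← smul_neg]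
  exact smul_le_smul_of_nonneg_left (neg_le_abs z) hc

section DualAbs

variable {E : Type*} [NormedAddCommGroup E] [Lattice E] [HasSolidNorm E] [NormedSpace ℝ E]
  (f : E →L[ℝ] ℝ)

theorem abs_apply_le_of_abs_le {z x : E} (hz : |z| ≤ x) : |f z| ≤ ‖f‖ * ‖x‖ := by
  rw [← Real.norm_eq_abs]
  exact (f.le_opNorm z).trans <|
    mul_le_mul_of_nonneg_left (HasSolidNorm.solid (hz.trans (le_abs_self x))) (norm_nonneg f)

theorem bddAbove_dualAbs_set (x : E) : BddAbove {r : ℝ | ∃ z : E, |z| ≤ x ∧ r = |f z|} :=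
  ⟨‖f‖ * ‖x‖, by rintro _ ⟨z, hz, rfl⟩; exact abs_apply_le_of_abs_le f hz⟩

variable [IsOrderedAddMonoid E]

theorem le_dualAbs {z x : E} (hz : |z| ≤ x) : |f z| ≤ dualAbs f x :=
  le_csSup (bddAbove_dualAbs_set f x) ⟨z, hz, rfl⟩

theorem dualAbs_nonneg (x : E) : 0 ≤ dualAbs f x :=
  Real.sSup_nonneg (by rintro _ ⟨z, -, rfl⟩; exact abs_nonneg _)

theorem dualAbs_le_norm_mul_norm (x : E) : dualAbs f x ≤ ‖f‖ * ‖x‖ :=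
  Real.sSup_le (by rintro _ ⟨z, hz, rfl⟩; exact abs_apply_le_of_abs_le f hz) (by positivity)

theorem dualAbs_zero : dualAbs f 0 = 0 :=
  le_antisymm (by simpa using dualAbs_le_norm_mul_norm f 0) (dualAbs_nonneg f 0)

theorem dualAbs_mono {x y : E} (h : x ≤ y) : dualAbs f x ≤ dualAbs f y :=
  Real.sSup_le (by rintro _ ⟨z, hz, rfl⟩; exact le_dualAbs f (hz.trans h)) (dualAbs_nonneg f y)

theorem dualAbs_add {a b : E} (ha : 0 ≤ a) (hb : 0 ≤ b) :
    dualAbs f (a + b) = dualAbs f a + dualAbs f b := by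
  apply le_antisymm
  · refine Real.sSup_le ?_ (add_nonneg (dualAbs_nonneg f a) (dualAbs_nonneg f b))
    rintro _ ⟨z, hz, rfl⟩
    obtain ⟨z₁, z₂, rfl, h₁, h₂⟩ := exists_add_abs_le_of_abs_le_add ha hb hz
    calc |f (z₁ + z₂)| ≤ |f z₁| + |f z₂| := by rw [map_add]; exact abs_add_le _ _
      _ ≤ dualAbs f a + dualAbs f b := add_le_add (le_dualAbs f h₁) (le_dualAbs f h₂)
  · have hne : ∀ x : E, 0 ≤ x → {r : ℝ | ∃ z : E, |z| ≤ x ∧ r = |f z|}.Nonempty :=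
      fun x hx => ⟨_, 0, by rwa [abs_zero], rfl⟩
    rw [dualAbs, dualAbs, ← csSup_add (hne a ha) (bddAbove_dualAbs_set f a) (hne b hb)
      (bddAbove_dualAbs_set f b)]
    refine csSup_le ((hne a ha).add (hne b hb)) ?_
    rintro _ ⟨_, ⟨z₁, h₁, rfl⟩, _, ⟨z₂, h₂, rfl⟩, rfl⟩
    have flip_sign (z : E) : ∃ w : E, |w| = |z| ∧ f w = |f z| := by
      rcases le_total 0 (f z) with h | h
      · exact ⟨z, rfl, (abs_of_nonneg h).symm⟩
      · exact ⟨-z, abs_neg z, by rw [map_neg, abs_of_nonpos h]⟩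
    obtain ⟨w₁, hw₁, hfw₁⟩ := flip_sign z₁
    obtain ⟨w₂, hw₂, hfw₂⟩ := flip_sign z₂
    have hw : |w₁ + w₂| ≤ a + b :=
      (abs_add_le w₁ w₂).trans (add_le_add (hw₁ ▸ h₁) (hw₂ ▸ h₂))
    calc |f z₁| + |f z₂| = f (w₁ + w₂) := by rw [map_add, hfw₁, hfw₂]
      _ ≤ |f (w₁ + w₂)| := le_abs_self _
      _ ≤ dualAbs f (a + b) := le_dualAbs f hw

theorem dualAbs_posPart_sub_dualAbs_negPart {a b : E} (ha : 0 ≤ a) (hb : 0 ≤ b) :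
    dualAbs f (a - b)⁺ - dualAbs f (a - b)⁻ = dualAbs f a - dualAbs f b := by
  have h : (a - b)⁺ + b = a + (a - b)⁻ := by
    rw [← sub_eq_sub_iff_add_eq_add, posPart_sub_negPart]
  have := congrArg (dualAbs f) h
  rw [dualAbs_add f (posPart_nonneg _) hb, dualAbs_add f ha (negPart_nonneg _)] at this
  linarith

theorem dualAbs_posPart_sub_negPart_add (x y : E) :
    dualAbs f (x + y)⁺ - dualAbs f (x + y)⁻ =
      (dualAbs f x⁺ - dualAbs f x⁻) + (dualAbs f y⁺ - dualAbs f y⁻) := by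
  have hxy : x + y = (x⁺ + y⁺) - (x⁻ + y⁻) := by
    rw [add_sub_add_comm, posPart_sub_negPart, posPart_sub_negPart]
  rw [hxy, dualAbs_posPart_sub_dualAbs_negPart f
      (add_nonneg (posPart_nonneg x) (posPart_nonneg y))
      (add_nonneg (negPart_nonneg x) (negPart_nonneg y)),
    dualAbs_add f (posPart_nonneg x) (posPart_nonneg y),
    dualAbs_add f (negPart_nonneg x) (negPart_nonneg y)]
  ring

theorem abs_dualAbs_posPart_sub_negPart_le (x : E) :
    |dualAbs f x⁺ - dualAbs f x⁻| ≤ ‖f‖ * ‖x‖ := by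
  have hbound {y : E} (hy : y ≤ |x|) : dualAbs f y ≤ ‖f‖ * ‖x‖ :=
    (dualAbs_mono f hy).trans <|
      (dualAbs_le_norm_mul_norm f |x|).trans_eq (by rw [norm_abs_eq_norm])
  have hpos : dualAbs f x⁺ ≤ ‖f‖ * ‖x‖ :=
    hbound (by rw [posPart_def]; exact sup_le (le_abs_self x) (abs_nonneg x))
  have hneg : dualAbs f x⁻ ≤ ‖f‖ * ‖x‖ :=
    hbound (by rw [negPart_def]; exact sup_le (neg_le_abs x) (abs_nonneg x))
  rw [abs_sub_le_iff]
  constructor <;> linarith [dualAbs_nonneg f x⁺, dualAbs_nonneg f x⁻]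

variable [PosSMulMono ℝ E]

theorem dualAbs_smul_le {c : ℝ} (hc : 0 < c) (x : E) :
    dualAbs f (c • x) ≤ c * dualAbs f x := by
  refine Real.sSup_le ?_ (mul_nonneg hc.le (dualAbs_nonneg f x))
  rintro _ ⟨z, hz, rfl⟩
  have hw : |c⁻¹ • z| ≤ x :=
    calc |c⁻¹ • z| ≤ c⁻¹ • |z| := abs_smul_le_smul_abs (inv_nonneg.2 hc.le) z
      _ ≤ c⁻¹ • c • x := smul_le_smul_of_nonneg_left hz (inv_nonneg.2 hc.le)
      _ = x := inv_smul_smul₀ hc.ne' x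
  calc |f z| = c * |f (c⁻¹ • z)| := by
        rw [map_smul, smul_eq_mul, abs_mul, abs_of_pos (inv_pos.2 hc),
          mul_inv_cancel_left₀ hc.ne']
    _ ≤ c * dualAbs f x := mul_le_mul_of_nonneg_left (le_dualAbs f hw) hc.le

theorem dualAbs_smul {c : ℝ} (hc : 0 ≤ c) (x : E) :
    dualAbs f (c • x) = c * dualAbs f x := by
  rcases hc.eq_or_lt with rfl | hc
  · simp [dualAbs_zero]
  refine le_antisymm (dualAbs_smul_le f hc x) ?_
  calc c * dualAbs f x = c * dualAbs f (c⁻¹ • c • x) := by rw [inv_smul_smul₀ hc.ne']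
    _ ≤ c * (c⁻¹ * dualAbs f (c • x)) :=
        mul_le_mul_of_nonneg_left (dualAbs_smul_le f (inv_pos.2 hc) _) hc.le
    _ = dualAbs f (c • x) := mul_inv_cancel_left₀ hc.ne' _

theorem dualAbs_posPart_sub_negPart_smul (c : ℝ) (x : E) :
    dualAbs f (c • x)⁺ - dualAbs f (c • x)⁻ = c * (dualAbs f x⁺ - dualAbs f x⁻) := by
  rcases le_total 0 c with hc | hc
  · have hcx : c • x = c • x⁺ - c • x⁻ := by rw [← smul_sub, posPart_sub_negPart]
    rw [hcx, dualAbs_posPart_sub_dualAbs_negPart f (smul_nonneg hc (posPart_nonneg x))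
        (smul_nonneg hc (negPart_nonneg x)), dualAbs_smul f hc, dualAbs_smul f hc]
    ring
  · have hc' : 0 ≤ -c := neg_nonneg.2 hc
    have hcx : c • x = (-c) • x⁻ - (-c) • x⁺ := by
      rw [← smul_sub, ← neg_sub, posPart_sub_negPart, smul_neg, neg_smul, neg_neg]
    rw [hcx, dualAbs_posPart_sub_dualAbs_negPart f (smul_nonneg hc' (negPart_nonneg x))
        (smul_nonneg hc' (posPart_nonneg x)), dualAbs_smul f hc', dualAbs_smul f hc']
    ring

def dualModulus : E →L[ℝ] ℝ :=
  LinearMap.mkContinuous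
    { toFun := fun x => dualAbs f x⁺ - dualAbs f x⁻
      map_add' := dualAbs_posPart_sub_negPart_add f
      map_smul' := dualAbs_posPart_sub_negPart_smul f }
    ‖f‖ (abs_dualAbs_posPart_sub_negPart_le f)

theorem dualModulus_apply (x : E) : dualModulus f x = dualAbs f x⁺ - dualAbs f x⁻ := rfl

theorem dualModulus_apply_of_nonneg {x : E} (hx : 0 ≤ x) : dualModulus f x = dualAbs f x := by
  rw [dualModulus_apply, posPart_eq_self.2 hx, negPart_eq_zero.2 hx, dualAbs_zero, sub_zero]

end DualAbs

theorem PropertyD.weakStarNull_dualModulus {F : Type*} [NormedAddCommGroup F] [Lattice F]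
    [IsOrderedAddMonoid F] [HasSolidNorm F] [NormedSpace ℝ F] [PosSMulMono ℝ F]
    (hF : PropertyD F) {f : ℕ → F →L[ℝ] ℝ} (hf : WeakStarNull f)
    (hdisj : Pairwise fun n m => DualDisjoint (f n) (f m)) :
    WeakStarNull fun n => dualModulus (f n) := fun x => by
  simpa only [dualModulus_apply, sub_zero] using
    (hF f hf hdisj _ (posPart_nonneg x)).sub (hF f hf hdisj _ (negPart_nonneg x))

section PositiveOperator

variable {E F : Type*} [NormedAddCommGroup E] [Lattice E] [IsOrderedAddMonoid E] [HasSolidNorm E]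
  [NormedSpace ℝ E] [NormedAddCommGroup F] [Lattice F] [IsOrderedAddMonoid F] [HasSolidNorm F]
  [NormedSpace ℝ F] {S : E →L[ℝ] F}

theorem IsPositiveOp.abs_apply_le (hS : IsPositiveOp S) (z : E) : |S z| ≤ S |z| := by
  have hle := hS _ (sub_nonneg.2 (le_abs_self z))
  have hge := hS _ (sub_nonneg.2 (neg_le_abs z))
  rw [map_sub, sub_nonneg] at hle
  rw [map_sub, map_neg, sub_nonneg] at hge
  exact abs_le'.2 ⟨hle, hge⟩

variable [PosSMulMono ℝ F]

theorem IsPositiveOp.positiveFunctional_dualModulus_comp (hS : IsPositiveOp S)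
    (f : F →L[ℝ] ℝ) :
    PositiveFunctional ((dualModulus f).comp S) := fun x hx => by
  rw [ContinuousLinearMap.comp_apply, dualModulus_apply_of_nonneg f (hS x hx)]
  exact dualAbs_nonneg f _

theorem IsPositiveOp.norm_comp_le_norm_dualModulus_comp (hS : IsPositiveOp S)
    (f : F →L[ℝ] ℝ) :
    ‖f.comp S‖ ≤ ‖(dualModulus f).comp S‖ := by
  refine ContinuousLinearMap.opNorm_le_bound _ (norm_nonneg _) fun y => ?_
  calc ‖f (S y)‖ = |f (S y)| := Real.norm_eq_abs _
    _ ≤ dualAbs f (S |y|) := le_dualAbs f (hS.abs_apply_le y)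
    _ = (dualModulus f).comp S |y| :=
        (dualModulus_apply_of_nonneg f (hS _ (abs_nonneg y))).symm
    _ ≤ ‖(dualModulus f).comp S‖ * ‖y‖ := by
        simpa only [norm_abs_eq_norm, Real.norm_eq_abs] using
          (le_abs_self _).trans (((dualModulus f).comp S).le_opNorm |y|)

end PositiveOperator

theorem almostLimited_comp_of_dualPositiveSchur_general
    {X E F : Type*} [NormedAddCommGroup X] [NormedSpace ℝ X]
    [NormedAddCommGroup E] [Lattice E] [IsOrderedAddMonoid E] [HasSolidNorm E] [NormedSpace ℝ E]
    [NormedAddCommGroup F] [Lattice F] [IsOrderedAddMonoid F] [HasSolidNorm F] [NormedSpace ℝ F] [PosSMulStrictMono ℝ F]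
    (hE : DualPositiveSchur E) (hF : PropertyD F)
    (R : X →L[ℝ] E) (S : E →L[ℝ] F) (hS : IsPositiveOp S) :
    AlmostLimited (S.comp R) := by
  intro f hf hdisj
  have hmod : Tendsto (fun n => ‖(dualModulus (f n)).comp S‖) atTop (𝓝 0) :=
    hE _ (fun x => hF.weakStarNull_dualModulus hf hdisj (S x))
      (fun n => hS.positiveFunctional_dualModulus_comp (f n))
  refine squeeze_zero (fun n => norm_nonneg _) (fun n => ?_) (by simpa using hmod.mul_const ‖R‖)
  calc ‖(f n).comp (S.comp R)‖ = ‖((f n).comp S).comp R‖ := rfl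
    _ ≤ ‖(f n).comp S‖ * ‖R‖ := ContinuousLinearMap.opNorm_comp_le _ _
    _ ≤ ‖(dualModulus (f n)).comp S‖ * ‖R‖ :=
        mul_le_mul_of_nonneg_right (hS.norm_comp_le_norm_dualModulus_comp (f n)) (norm_nonneg R)

/-- If `E` has the dual positive Schur property, `F` has property (d), and
`S : E → F` is positive, then `S ∘ R` is almost limited for any operator `R : X → E`. -/
theorem almostLimited_comp_of_dualPositiveSchur
    {X E F : Type*} [NormedAddCommGroup X] [NormedSpace ℝ X] [CompleteSpace X]
    [NormedAddCommGroup E] [Lattice E] [IsOrderedAddMonoid E] [HasSolidNorm E] [NormedSpace ℝ E] [PosSMulStrictMono ℝ E] [PosSMulReflectLT ℝ E] [CompleteSpace E]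
    [NormedAddCommGroup F] [Lattice F] [IsOrderedAddMonoid F] [HasSolidNorm F] [NormedSpace ℝ F] [PosSMulStrictMono ℝ F] [PosSMulReflectLT ℝ F] [CompleteSpace F]
    (hE : DualPositiveSchur E) (hF : PropertyD F)
    (R : X →L[ℝ] E) (S : E →L[ℝ] F) (hS : IsPositiveOp S) :
    AlmostLimited (S.comp R) :=
  almostLimited_comp_of_dualPositiveSchur_general hE hF R S hS
end
end

section
/- If a Banach lattice E is not reflexive, then there exists a sequence (f_n) of positive functionals in the closed unit ball of E* which has no weakly convergent subsequence. -/
open Filter Topology Metric Set NormedSpace BoundedContinuousFunction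

noncomputable section

/-!
A bidual element at distance `2θ > 0` from `E` produces, through Hahn–Banach and Helly's lemma,
functionals `Fₙ` and points `xₖ` in the unit balls with `Fₙ xₖ = θ` for `n ≤ k` and `Fₙ xₖ = 0`
for `k < n`. No subsequence of `(Fₙ)` converges weakly: a weak limit `g` vanishes at every `xₖ`,
whereas a weak* cluster point of `(xₖ)` in `E**` equals `θ` at every `Fₙ` and `0` at `g`.
The Riesz–Kantorovich formula splits `Fₙ = Fₙ⁺ - Fₙ⁻` into positive functionals of norm at most
`1`; if `(Fₙ⁺)` and `(Fₙ⁻)` both had weakly convergent subsequences, then so would `(Fₙ)`.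
-/

section SolidNorm

variable {E : Type*} [NormedAddCommGroup E] [Lattice E] [IsOrderedAddMonoid E] [HasSolidNorm E]

theorem norm_le_norm_of_mem_Icc {x y : E} (hy : y ∈ Icc 0 x) : ‖y‖ ≤ ‖x‖ :=
  HasSolidNorm.solid <| by rw [abs_of_nonneg hy.1, abs_of_nonneg (hy.1.trans hy.2)]; exact hy.2

theorem norm_posPart_le (x : E) : ‖x⁺‖ ≤ ‖x‖ := HasSolidNorm.solid <| by
  rw [abs_of_nonneg (posPart_nonneg x), ← posPart_add_negPart]
  exact le_add_of_nonneg_right (negPart_nonneg x)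

theorem norm_negPart_le (x : E) : ‖x⁻‖ ≤ ‖x‖ := HasSolidNorm.solid <| by
  rw [abs_of_nonneg (negPart_nonneg x), ← posPart_add_negPart]
  exact le_add_of_nonneg_left (posPart_nonneg x)

variable [NormedSpace ℝ E]

theorem PositiveFunctional.norm_le {g : E →L[ℝ] ℝ} (hg : PositiveFunctional g) {C : ℝ}
    (hC : 0 ≤ C) (hgC : ∀ x, 0 ≤ x → g x ≤ C * ‖x‖) : ‖g‖ ≤ C := by
  refine g.opNorm_le_bound hC fun x => ?_
  have hx : g x = g x⁺ - g x⁻ := by rw [← map_sub, posPart_sub_negPart]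
  have hpos := (hgC _ (posPart_nonneg x)).trans (mul_le_mul_of_nonneg_left (norm_posPart_le x) hC)
  have hneg := (hgC _ (negPart_nonneg x)).trans (mul_le_mul_of_nonneg_left (norm_negPart_le x) hC)
  rw [Real.norm_eq_abs, hx, abs_sub_le_iff]
  constructor <;> linarith [hg _ (posPart_nonneg x), hg _ (negPart_nonneg x)]

/-- The extension is `x ↦ φ x⁺ - φ x⁻`. -/
theorem exists_continuousLinearMap_eq_of_nonneg (φ : E → ℝ) (hφ : ∀ x, 0 ≤ x → 0 ≤ φ x)
    (hadd : ∀ x y, 0 ≤ x → 0 ≤ y → φ (x + y) = φ x + φ y) {C : ℝ}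
    (hC : ∀ x, 0 ≤ x → φ x ≤ C * ‖x‖) :
    ∃ g : E →L[ℝ] ℝ, ∀ x, 0 ≤ x → g x = φ x := by
  have hsub : ∀ a b c d : E, 0 ≤ a → 0 ≤ b → 0 ≤ c → 0 ≤ d → a - b = c - d →
      φ a - φ b = φ c - φ d := fun a b c d ha hb hc hd h => by
    have := congr_arg φ (sub_eq_sub_iff_add_eq_add.1 h)
    rw [hadd _ _ ha hd, hadd _ _ hc hb] at this
    linarith
  let ψ : E →+ ℝ := AddMonoidHom.mk' (fun x => φ x⁺ - φ x⁻) fun x y => by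
    have h := hsub _ _ _ _ (posPart_nonneg (x + y)) (negPart_nonneg (x + y))
      (add_nonneg (posPart_nonneg x) (posPart_nonneg y))
      (add_nonneg (negPart_nonneg x) (negPart_nonneg y))
      (by rw [posPart_sub_negPart, add_sub_add_comm, posPart_sub_negPart, posPart_sub_negPart])
    rw [h, hadd _ _ (posPart_nonneg x) (posPart_nonneg y),
      hadd _ _ (negPart_nonneg x) (negPart_nonneg y)]
    ring
  have hψ : ∀ x, ‖ψ x‖ ≤ |C| * ‖x‖ := fun x => by
    have hpos := (hC _ (posPart_nonneg x)).trans
      (mul_le_mul (le_abs_self C) (norm_posPart_le x) (norm_nonneg _) (abs_nonneg C))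
    have hneg := (hC _ (negPart_nonneg x)).trans
      (mul_le_mul (le_abs_self C) (norm_negPart_le x) (norm_nonneg _) (abs_nonneg C))
    change |φ x⁺ - φ x⁻| ≤ |C| * ‖x‖
    rw [abs_sub_le_iff]
    constructor <;> linarith [hφ _ (posPart_nonneg x), hφ _ (negPart_nonneg x)]
  refine ⟨ψ.toRealLinearMap (AddMonoidHomClass.continuous_of_bound ψ |C| hψ), fun x hx => ?_⟩
  have hφ0 : φ 0 = 0 := by simpa using hadd 0 0 le_rfl le_rfl
  simp [ψ, posPart_eq_self.2 hx, negPart_eq_zero.2 hx, hφ0]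

end SolidNorm

theorem exists_add_eq_of_le_add {α : Type*} [Lattice α] [AddCommGroup α] [IsOrderedAddMonoid α]
    {y x₁ x₂ : α} (hy : 0 ≤ y) (h₁ : 0 ≤ x₁) (h₂ : 0 ≤ x₂) (hyx : y ≤ x₁ + x₂) :
    ∃ y₁ ∈ Icc 0 x₁, ∃ y₂ ∈ Icc 0 x₂, y = y₁ + y₂ := by
  have hy₂ : y - y ⊓ x₁ = (y - x₁) ⊔ 0 := by rw [sub_inf, sub_self, sup_comm]
  refine ⟨y ⊓ x₁, ⟨le_inf hy h₁, inf_le_right⟩, y - y ⊓ x₁, ⟨?_, ?_⟩, (add_sub_cancel _ _).symm⟩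
  · rw [hy₂]; exact le_sup_right
  · rw [hy₂]; exact sup_le (sub_le_iff_le_add'.2 hyx) h₂

section RieszKantorovich

variable {E : Type*} [NormedAddCommGroup E] [Lattice E] [NormedSpace ℝ E]

/-- The Riesz–Kantorovich formula for the positive part `f⁺` of `f`, valid at `x ≥ 0`. -/
def supIcc (f : E →L[ℝ] ℝ) (x : E) : ℝ := sSup (f '' Icc 0 x)

theorem supIcc_le (f : E →L[ℝ] ℝ) {x : E} (hx : 0 ≤ x) {c : ℝ} (h : ∀ y ∈ Icc 0 x, f y ≤ c) :
    supIcc f x ≤ c :=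
  csSup_le ⟨f 0, mem_image_of_mem f ⟨le_rfl, hx⟩⟩ (forall_mem_image.2 h)

variable [IsOrderedAddMonoid E] [HasSolidNorm E] (f : E →L[ℝ] ℝ) {x y : E}

theorem apply_le_norm_mul_of_mem_Icc (hy : y ∈ Icc 0 x) : f y ≤ ‖f‖ * ‖x‖ :=
  (le_abs_self _).trans <| (f.le_opNorm y).trans <| by gcongr; exact norm_le_norm_of_mem_Icc hy

theorem apply_le_supIcc (hy : y ∈ Icc 0 x) : f y ≤ supIcc f x :=
  le_csSup ⟨‖f‖ * ‖x‖, forall_mem_image.2 fun _ => apply_le_norm_mul_of_mem_Icc f⟩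
    (mem_image_of_mem f hy)

theorem supIcc_nonneg (hx : 0 ≤ x) : 0 ≤ supIcc f x := by
  simpa using apply_le_supIcc f ⟨le_rfl, hx⟩

theorem supIcc_le_norm_mul (hx : 0 ≤ x) : supIcc f x ≤ ‖f‖ * ‖x‖ :=
  supIcc_le f hx fun _ => apply_le_norm_mul_of_mem_Icc f

theorem supIcc_add {x₁ x₂ : E} (h₁ : 0 ≤ x₁) (h₂ : 0 ≤ x₂) :
    supIcc f (x₁ + x₂) = supIcc f x₁ + supIcc f x₂ := by
  apply le_antisymm
  · refine supIcc_le f (add_nonneg h₁ h₂) fun y hy => ?_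
    obtain ⟨y₁, hy₁, y₂, hy₂, rfl⟩ := exists_add_eq_of_le_add hy.1 h₁ h₂ hy.2
    rw [map_add]
    exact add_le_add (apply_le_supIcc f hy₁) (apply_le_supIcc f hy₂)
  · rw [← le_sub_iff_add_le]
    refine supIcc_le f h₁ fun y₁ hy₁ => ?_
    rw [le_sub_iff_add_le', ← le_sub_iff_add_le]
    refine supIcc_le f h₂ fun y₂ hy₂ => ?_
    rw [le_sub_iff_add_le', ← map_add]
    exact apply_le_supIcc f ⟨add_nonneg hy₁.1 hy₂.1, add_le_add hy₁.2 hy₂.2⟩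

theorem exists_positiveFunctional_sub_eq :
    ∃ g h : E →L[ℝ] ℝ, PositiveFunctional g ∧ PositiveFunctional h ∧
      ‖g‖ ≤ ‖f‖ ∧ ‖h‖ ≤ ‖f‖ ∧ g - h = f := by
  obtain ⟨g, hg⟩ := exists_continuousLinearMap_eq_of_nonneg (supIcc f)
    (fun _ => supIcc_nonneg f) (fun _ _ => supIcc_add f) (fun _ => supIcc_le_norm_mul f)
  have hg_pos : PositiveFunctional g := fun x hx => (hg x hx).symm ▸ supIcc_nonneg f hx
  have hgf_pos : PositiveFunctional (g - f) := fun x hx => by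
    simpa [hg x hx] using apply_le_supIcc f ⟨hx, le_rfl⟩
  refine ⟨g, g - f, hg_pos, hgf_pos, hg_pos.norm_le (norm_nonneg f) fun x hx => ?_,
    hgf_pos.norm_le (norm_nonneg f) fun x hx => ?_, sub_sub_cancel g f⟩
  · exact (hg x hx).symm ▸ supIcc_le_norm_mul f hx
  · -- `(g - f) x = sup f [-x, 0]`, and `[-x, 0]` lies in the ball of radius `‖x‖`.
    rw [_root_.sub_apply, hg x hx, sub_le_iff_le_add]
    refine supIcc_le f hx fun y hy => ?_
    have hxy : ‖x - y‖ ≤ ‖x‖ := norm_le_norm_of_mem_Icc ⟨sub_nonneg.2 hy.2, sub_le_self x hy.1⟩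
    have : f y - f x ≤ ‖f‖ * ‖x‖ := calc
      f y - f x = f (y - x) := (map_sub f y x).symm
      _ ≤ ‖f‖ * ‖y - x‖ := (le_abs_self _).trans (f.le_opNorm _)
      _ ≤ ‖f‖ * ‖x‖ := by rw [norm_sub_rev]; gcongr
    linarith

end RieszKantorovich

section Bidual

variable {𝕜 : Type*} [RCLike 𝕜]

theorem NormedSpace.inclusionInDoubleDual_surjective {Q : Type*} [NormedAddCommGroup Q]
    [NormedSpace 𝕜 Q] [FiniteDimensional 𝕜 Q] :
    Function.Surjective (inclusionInDoubleDual 𝕜 Q) := by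
  intro Ψ
  obtain ⟨q, hq⟩ := (Module.evalEquiv 𝕜 Q).surjective
    (Ψ.toLinearMap ∘ₗ LinearMap.toContinuousLinearMap.toLinearMap)
  exact ⟨q, ContinuousLinearMap.ext fun h => LinearMap.congr_fun hq h.toLinearMap⟩

variable {Y : Type*} [SeminormedAddCommGroup Y] [NormedSpace 𝕜 Y]

theorem Submodule.norm_mkQL_le (M : Submodule 𝕜 Y) : ‖M.mkQL‖ ≤ 1 :=
  M.mkQL.opNorm_le_bound zero_le_one fun y => (one_mul ‖y‖).symm ▸ Quotient.norm_mk_le M y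

theorem Submodule.exists_dual_map_eq_infDist (M : Submodule 𝕜 Y) (y : Y) :
    ∃ Φ : StrongDual 𝕜 Y, ‖Φ‖ ≤ 1 ∧ Φ y = infDist y M ∧ ∀ m ∈ M, Φ m = 0 := by
  obtain ⟨G, hG, hGy⟩ := exists_dual_vector'' 𝕜 (M.mkQ y)
  refine ⟨G.comp M.mkQL, ?_, ?_, fun m hm => ?_⟩
  · exact (G.opNorm_comp_le _).trans (mul_le_one₀ hG (norm_nonneg _) M.norm_mkQL_le)
  · have : ‖M.mkQ y‖ = infDist y M := QuotientAddGroup.norm_mk (S := M.toAddSubgroup) y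
    change G (M.mkQ y) = _
    rw [hGy, this]
  · simp [(Quotient.mk_eq_zero M).2 hm]

variable {X : Type*} [NormedAddCommGroup X] [NormedSpace 𝕜 X]

/-- Helly's lemma. -/
theorem exists_forall_apply_eq_of_bidual {ι : Type*} [Finite ι] (f : ι → StrongDual 𝕜 X)
    (ξ : StrongDual 𝕜 (StrongDual 𝕜 X)) {ε : ℝ} (hε : 0 < ε) :
    ∃ x : X, (∀ i, f i x = ξ (f i)) ∧ ‖x‖ < ‖ξ‖ + ε := by
  -- The `f i` factor through the quotient by their common kernel, which is finite-dimensional,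
  -- hence reflexive.
  let T : X →L[𝕜] ι → 𝕜 := ContinuousLinearMap.pi f
  let N : Submodule 𝕜 X := T.ker
  have : IsClosed (N : Set X) := T.isClosed_ker
  have : FiniteDimensional 𝕜 (X ⧸ N) :=
    Module.Finite.equiv (LinearMap.quotKerEquivRange T.toLinearMap).symm
  let πdual : StrongDual 𝕜 (X ⧸ N) →L[𝕜] StrongDual 𝕜 X :=
    (ContinuousLinearMap.compL 𝕜 X (X ⧸ N) 𝕜).flip N.mkQL
  have hπdual : ‖πdual‖ ≤ 1 := πdual.opNorm_le_bound zero_le_one fun h =>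
    (h.opNorm_comp_le _).trans <| by
      simpa using mul_le_of_le_one_right (norm_nonneg h) N.norm_mkQL_le
  obtain ⟨q, hq⟩ := inclusionInDoubleDual_surjective (ξ.comp πdual)
  have hq_norm : ‖q‖ ≤ ‖ξ‖ := calc
    ‖q‖ = ‖ξ.comp πdual‖ := by rw [← hq]; exact ((inclusionInDoubleDualLi 𝕜).norm_map q).symm
    _ ≤ ‖ξ‖ * ‖πdual‖ := ξ.opNorm_comp_le _
    _ ≤ ‖ξ‖ := mul_le_of_le_one_right (norm_nonneg ξ) hπdual
  obtain ⟨x, rfl, hx⟩ := Submodule.Quotient.norm_mk_lt q hε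
  exact ⟨x, fun i => congr($hq (N.liftQL (f i) fun y hy => congr_fun hy i)), by linarith⟩

theorem exists_ultrafilter_tendsto_apply {x : ℕ → X} {R : ℝ} (hx : ∀ k, ‖x k‖ ≤ R) :
    ∃ (U : Ultrafilter ℕ) (Φ : StrongDual 𝕜 (StrongDual 𝕜 X)), (U : Filter ℕ) ≤ atTop ∧
      ∀ f : StrongDual 𝕜 X, Tendsto (fun k => f (x k)) (U : Filter ℕ) (𝓝 (Φ f)) := by
  let u : ℕ → WeakDual 𝕜 (StrongDual 𝕜 X) :=
    fun k => StrongDual.toWeakDual (inclusionInDoubleDual 𝕜 X (x k))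
  have hu : ∀ k, u k ∈ WeakDual.toStrongDual ⁻¹' closedBall 0 R := fun k => by
    simp only [mem_preimage, mem_closedBall]
    exact (dist_zero_right (inclusionInDoubleDual 𝕜 X (x k))).trans_le
      ((double_dual_bound 𝕜 X (x k)).trans (hx k))
  obtain ⟨Φ, -, hΦ⟩ := (WeakDual.isCompact_closedBall (0 : StrongDual 𝕜 (StrongDual 𝕜 X)) R
    ).exists_mapClusterPt (f := atTop) (tendsto_principal.2 (Eventually.of_forall hu))
  obtain ⟨U, hU, hUΦ⟩ := mapClusterPt_iff_ultrafilter.1 hΦ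
  exact ⟨U, WeakDual.toStrongDual Φ, hU,
    fun f => ((WeakDual.eval_continuous f).tendsto Φ).comp hUΦ⟩

end Bidual

section JamesSequence

/-- By James' theorem, such sequences exist for some `θ > 0` iff `X` is not reflexive. -/
structure JamesSequence (X : Type*) [NormedAddCommGroup X] [NormedSpace ℝ X] (θ : ℝ) where
  functional : ℕ → StrongDual ℝ X
  point : ℕ → X
  norm_functional_le : ∀ n, ‖functional n‖ ≤ 1
  norm_point_le : ∀ k, ‖point k‖ ≤ 1
  apply_of_le : ∀ ⦃n k⦄, n ≤ k → functional n (point k) = θ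
  apply_of_lt : ∀ ⦃n k⦄, k < n → functional n (point k) = 0

variable {X : Type*} [NormedAddCommGroup X] [NormedSpace ℝ X]

theorem exists_notMem_range_inclusionInDoubleDual_norm_lt_one (hX : ¬ ReflexiveSpace X) :
    ∃ ξ ∉ range (inclusionInDoubleDual ℝ X), ‖ξ‖ < 1 := by
  obtain ⟨ξ, hξ⟩ : ∃ ξ, ξ ∉ range (inclusionInDoubleDual ℝ X) := by
    simpa [ReflexiveSpace, Function.Surjective] using hX
  have hξ_ne : ξ ≠ 0 := by rintro rfl; exact hξ ⟨0, map_zero _⟩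
  have hξ_pos : 0 < ‖ξ‖ := by positivity
  refine ⟨(2 * ‖ξ‖)⁻¹ • ξ, fun ⟨x, hx⟩ => hξ ⟨(2 * ‖ξ‖) • x, ?_⟩, ?_⟩
  · rw [map_smul, hx, smul_inv_smul₀ (by positivity)]
  · calc ‖(2 * ‖ξ‖)⁻¹ • ξ‖ ≤ ‖(2 * ‖ξ‖)⁻¹‖ * ‖ξ‖ := ContinuousLinearMap.opNorm_smul_le _ _
      _ = 1 / 2 := by rw [Real.norm_of_nonneg (by positivity)]; field_simp
      _ < 1 := by norm_num

theorem exists_functional_vanishing_of_lt_infDist {ξ : StrongDual ℝ (StrongDual ℝ X)} {θ : ℝ}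
    (hθ : 0 < θ) (hθξ : θ < infDist ξ (range (inclusionInDoubleDual ℝ X)))
    {ι : Type*} [Finite ι] (v : ι → X) :
    ∃ f : StrongDual ℝ X, ‖f‖ ≤ 1 ∧ ξ f = θ ∧ ∀ i, f (v i) = 0 := by
  let M : Submodule ℝ (StrongDual ℝ (StrongDual ℝ X)) :=
    Submodule.span ℝ (range fun i => inclusionInDoubleDual ℝ X (v i))
  obtain ⟨Φ, hΦ, hΦξ, hΦM⟩ := Submodule.exists_dual_map_eq_infDist (𝕜 := ℝ) M ξ
  have hdist : infDist ξ (range (inclusionInDoubleDual ℝ X)) ≤ infDist ξ M := by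
    have hM : M ≤ LinearMap.range (inclusionInDoubleDual ℝ X : X →ₗ[ℝ] _) :=
      Submodule.span_le.2 (range_subset_iff.2 fun i => LinearMap.mem_range_self _ (v i))
    refine infDist_le_infDist_of_subset (fun y hy => ?_) ⟨0, M.zero_mem⟩
    obtain ⟨x, rfl⟩ := hM hy
    exact mem_range_self x
  set d := infDist ξ M
  have hd : 0 < d := by linarith
  -- Rescale `Φ` to take the value `θ` at `ξ`, and pull it back to `X*` with Helly's lemma.
  obtain ⟨f, hf, hf_norm⟩ := exists_forall_apply_eq_of_bidual
    (fun o : Option ι => o.elim ξ fun i => inclusionInDoubleDual ℝ X (v i))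
    ((θ / d) • Φ) (ε := 1 - θ / d) (sub_pos.2 ((div_lt_one hd).2 (by linarith)))
  refine ⟨f, ?_, ?_, fun i => ?_⟩
  · have : ‖(θ / d) • Φ‖ ≤ θ / d := by
      rw [norm_smul, Real.norm_of_nonneg (by positivity)]
      exact mul_le_of_le_one_right (by positivity) hΦ
    linarith
  · simpa [hΦξ, hd.ne'] using hf none
  · simpa [hΦM _ (Submodule.subset_span (mem_range_self i))] using hf (some i)

theorem exists_jamesSequence_of_notMem_range [CompleteSpace X]
    {ξ : StrongDual ℝ (StrongDual ℝ X)} (hξ : ξ ∉ range (inclusionInDoubleDual ℝ X))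
    (hξ_norm : ‖ξ‖ < 1) : ∃ θ > 0, Nonempty (JamesSequence X θ) := by
  have hisom : Isometry (inclusionInDoubleDual ℝ X) := (inclusionInDoubleDualLi ℝ).isometry
  have hd : 0 < infDist ξ (range (inclusionInDoubleDual ℝ X)) :=
    (hisom.isClosedEmbedding.isClosed_range.notMem_iff_infDist_pos (range_nonempty _)).1 hξ
  set θ := infDist ξ (range (inclusionInDoubleDual ℝ X)) / 2
  have hθ : 0 < θ := by positivity
  -- Build the pairs `(F n, x n)` one at a time: `F n` kills the earlier points, and `x n` is
  -- given by Helly's lemma so that `F k (x n) = ξ (F k) = θ` for all `k ≤ n`.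
  obtain ⟨p, hp, hpp⟩ := exists_seq_of_forall_finset_exists
    (fun p : StrongDual ℝ X × X => ‖p.1‖ ≤ 1 ∧ ‖p.2‖ ≤ 1 ∧ ξ p.1 = θ ∧ p.1 p.2 = θ)
    (fun p q => q.1 p.2 = 0 ∧ p.1 q.2 = θ) fun s hs => by
      obtain ⟨f, hf_norm, hξf, hf⟩ :=
        exists_functional_vanishing_of_lt_infDist hθ (half_lt_self hd) fun p : s => p.1.2
      obtain ⟨x, hx, hx_norm⟩ := exists_forall_apply_eq_of_bidual
        (fun o : Option s => o.elim f fun p => p.1.1) ξ (sub_pos.2 hξ_norm)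
      refine ⟨(f, x), ⟨hf_norm, by linarith, hξf, ?_⟩, fun p hp => ⟨hf ⟨p, hp⟩, ?_⟩⟩
      · simpa [hξf] using hx none
      · simpa [(hs p hp).2.2.1] using hx (some ⟨p, hp⟩)
  refine ⟨θ, hθ, ⟨fun n => (p n).1, fun n => (p n).2, fun n => (hp n).1, fun n => (hp n).2.1,
    fun n k hnk => ?_, fun n k hkn => (hpp k n hkn).1⟩⟩
  rcases hnk.lt_or_eq with hnk | rfl
  · exact (hpp n k hnk).2
  · exact (hp n).2.2.2

theorem JamesSequence.not_tendsto_weakly {θ : ℝ} (J : JamesSequence X θ) (hθ : θ ≠ 0)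
    {φ : ℕ → ℕ} (hφ : StrictMono φ) (g : StrongDual ℝ X) :
    ¬ ∀ Φ : StrongDual ℝ (StrongDual ℝ X),
      Tendsto (fun k => Φ (J.functional (φ k))) atTop (𝓝 (Φ g)) := by
  intro hg
  have hg_point : ∀ k, g (J.point k) = 0 := fun k => by
    refine tendsto_nhds_unique (hg (inclusionInDoubleDual ℝ X (J.point k))) ?_
    refine tendsto_const_nhds.congr' ?_
    filter_upwards [eventually_gt_atTop k] with j hj
    exact (J.apply_of_lt (hj.trans_le hφ.le_apply)).symm
  obtain ⟨U, Φ, hU, hΦ⟩ := exists_ultrafilter_tendsto_apply J.norm_point_le (𝕜 := ℝ)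
  have hΦF : ∀ n, Φ (J.functional n) = θ := fun n => by
    refine tendsto_nhds_unique (hΦ _) (tendsto_const_nhds.congr' ?_)
    filter_upwards [hU (eventually_ge_atTop n)] with k hk
    exact (J.apply_of_le hk).symm
  have hΦg : Φ g = 0 := tendsto_nhds_unique (hΦ g) (by simp [hg_point])
  have hΦFφ : Tendsto (fun k => Φ (J.functional (φ k))) atTop (𝓝 θ) := by
    simpa only [hΦF] using tendsto_const_nhds
  exact hθ ((tendsto_nhds_unique hΦFφ (hg Φ)).trans hΦg)

end JamesSequence

theorem exists_positive_seq_no_weakly_convergent_subsequence_general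
    {E : Type*} [NormedAddCommGroup E] [Lattice E] [IsOrderedAddMonoid E] [HasSolidNorm E] [NormedSpace ℝ E]
    [CompleteSpace E] (hE : ¬ ReflexiveSpace E) :
    ∃ f : ℕ → E →L[ℝ] ℝ,
      (∀ n, PositiveFunctional (f n)) ∧ (∀ n, ‖f n‖ ≤ 1) ∧
      ¬ ∃ (φ : ℕ → ℕ) (g : E →L[ℝ] ℝ), StrictMono φ ∧
        ∀ Φ : (E →L[ℝ] ℝ) →L[ℝ] ℝ, Tendsto (fun k => Φ (f (φ k))) atTop (𝓝 (Φ g)) := by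
  obtain ⟨ξ, hξ, hξ_norm⟩ := exists_notMem_range_inclusionInDoubleDual_norm_lt_one hE
  obtain ⟨θ, hθ, ⟨J⟩⟩ := exists_jamesSequence_of_notMem_range hξ hξ_norm
  choose P N hP hN hP_norm hN_norm hPN using
    fun n => exists_positiveFunctional_sub_eq (J.functional n)
  by_contra! h
  obtain ⟨φ₁, g₁, hφ₁, hg₁⟩ := h P hP fun n => (hP_norm n).trans (J.norm_functional_le n)
  obtain ⟨φ₂, g₂, hφ₂, hg₂⟩ := h (N ∘ φ₁) (fun n => hN _) fun n =>
    (hN_norm _).trans (J.norm_functional_le _)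
  refine J.not_tendsto_weakly hθ.ne' (hφ₁.comp hφ₂) (g₁ - g₂) fun Φ => ?_
  simpa [← hPN, map_sub] using ((hg₁ Φ).comp hφ₂.tendsto_atTop).sub (hg₂ Φ)

/-- If a Banach lattice `E` is not reflexive, then there is a sequence of positive
functionals in the closed unit ball of `E*` with no weakly convergent subsequence. -/
theorem exists_positive_seq_no_weakly_convergent_subsequence
    {E : Type*} [NormedAddCommGroup E] [Lattice E] [IsOrderedAddMonoid E] [HasSolidNorm E] [NormedSpace ℝ E] [PosSMulStrictMono ℝ E] [PosSMulReflectLT ℝ E]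
    [CompleteSpace E] (hE : ¬ ReflexiveSpace E) :
    ∃ f : ℕ → E →L[ℝ] ℝ,
      (∀ n, PositiveFunctional (f n)) ∧ (∀ n, ‖f n‖ ≤ 1) ∧
      ¬ ∃ (φ : ℕ → ℕ) (g : E →L[ℝ] ℝ), StrictMono φ ∧
        ∀ Φ : (E →L[ℝ] ℝ) →L[ℝ] ℝ, Tendsto (fun k => Φ (f (φ k))) atTop (𝓝 (Φ g)) :=
  exists_positive_seq_no_weakly_convergent_subsequence_general hE
end
end
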